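/- Let V = (ZMod 2)^n, let C be a 2^n × 2^n unitary matrix indexed by V, let f : V × V → ℝ, and let M ⊆ V × V be any subset. With Z^s the diagonal matrix with (Z^s)_{w,w} = (−1)^{s·w} and f̂_{s,s'} = 2^{−2n} Σ_{w,z ∈ V} f(w,z)·(−1)^{s·w}·(−1)^{s'·z}, one has | (1/2^n) Σ_{w,z ∈ V} |C_{z,w}|² f(w,z) − Σ_{(s,s') ∈ M} f̂_{s,s'} · (1/2^n)·Tr(Z^s Cᴴ Z^{s'} C) | ≤ Σ_{(s,s') ∉ M} |f̂_{s,s'}|. -/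

import Mathlib

/-!
The normalized trace `t(s, s') = 2⁻ⁿ Tr(Zˢ Cᴴ Zˢ' C) = 2⁻ⁿ ∑_{w,z} (-1)^(s·w + s'·z) |C_{z,w}|²` is
the Walsh transform of `(w, z) ↦ |C_{z,w}|²`, so Plancherel for the Walsh characters of `V × V`
turns `∑_{(s,s')} f̂_{s,s'} t(s, s')`, summed over all pairs, into `2⁻ⁿ ∑_{w,z} |C_{z,w}|² f(w, z)`.
Columns of a unitary matrix are unit vectors, hence `|t| ≤ 1`, and dropping the pairs outside `M`
costs at most `∑_{(s,s') ∉ M} |f̂_{s,s'}|`.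
-/

open Matrix
open scoped ComplexOrder

/-- The real sign `(-1)^a` of an element `a : ZMod 2`. -/
def signOf (a : ZMod 2) : ℝ := if a = 0 then 1 else -1

open Finset Fintype

theorem signOf_add (a b : ZMod 2) : signOf (a + b) = signOf a * signOf b := by
  have h : ∀ a : ZMod 2, a = 0 ∨ a = 1 := by decide
  rcases h a with rfl | rfl <;> rcases h b with rfl | rfl <;>
    simp [signOf, show (1 + 1 : ZMod 2) = 0 from rfl]

theorem signOf_sub (a b : ZMod 2) : signOf (a - b) = signOf a * signOf b := by
  rw [sub_eq_add_neg, ZMod.neg_eq_self_mod_two, signOf_add]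

theorem abs_signOf (a : ZMod 2) : |signOf a| = 1 := by
  unfold signOf; split_ifs <;> norm_num

theorem signOf_eq_one_iff {a : ZMod 2} : signOf a = 1 ↔ a = 0 := by
  unfold signOf; split_ifs with h <;> norm_num [h]

section Walsh

variable {ι κ : Type*} [Fintype ι] [Fintype κ]

def walshChar (p x : (ι → ZMod 2) × (κ → ZMod 2)) : ℝ :=
  signOf (p.1 ⬝ᵥ x.1) * signOf (p.2 ⬝ᵥ x.2)

theorem abs_walshChar (p x : (ι → ZMod 2) × (κ → ZMod 2)) :
    |walshChar p x| = 1 := by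
  rw [walshChar, abs_mul, abs_signOf, abs_signOf, one_mul]

variable [DecidableEq ι] [DecidableEq κ]

theorem sum_signOf_dotProduct (v : ι → ZMod 2) :
    ∑ s : ι → ZMod 2, signOf (s ⬝ᵥ v) = if v = 0 then 2 ^ card ι else 0 := by
  -- `s ↦ (-1)^(s·v)` is an additive character, trivial exactly when `v = 0`.
  let ψ : AddChar (ι → ZMod 2) ℝ :=
    { toFun := fun s => signOf (s ⬝ᵥ v)
      map_zero_eq_one' := by simp [signOf]
      map_add_eq_mul' := fun s s' => by simp only [add_dotProduct, signOf_add] }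
  have hψ : ψ = 0 ↔ v = 0 := by
    refine ⟨fun h => funext fun i => ?_, fun h => AddChar.ext _ _ fun s => by simp [ψ, h, signOf]⟩
    have := DFunLike.congr_fun h (Pi.single i 1)
    simpa [ψ, signOf_eq_one_iff] using this
  have hsum := ψ.sum_eq_ite
  simp only [hψ, card_fun, ZMod.card, Nat.cast_pow, Nat.cast_ofNat] at hsum
  exact hsum

theorem sum_signOf_dotProduct_mul (v w : ι → ZMod 2) :
    ∑ s : ι → ZMod 2, signOf (s ⬝ᵥ v) * signOf (s ⬝ᵥ w) = if v = w then 2 ^ card ι else 0 := by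
  simp_rw [← signOf_sub, ← dotProduct_sub, sum_signOf_dotProduct, sub_eq_zero]

noncomputable def walshCoeff (f : (ι → ZMod 2) × (κ → ZMod 2) → ℝ)
    (p : (ι → ZMod 2) × (κ → ZMod 2)) : ℝ :=
  ((2 : ℝ) ^ (card ι + card κ))⁻¹ * ∑ x, f x * walshChar p x

theorem sum_walshChar_mul_walshChar (x y : (ι → ZMod 2) × (κ → ZMod 2)) :
    ∑ p, walshChar p x * walshChar p y = if x = y then 2 ^ (card ι + card κ) else 0 := by
  have hsplit : ∀ p : (ι → ZMod 2) × (κ → ZMod 2), walshChar p x * walshChar p y =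
      (signOf (p.1 ⬝ᵥ x.1) * signOf (p.1 ⬝ᵥ y.1)) * (signOf (p.2 ⬝ᵥ x.2) * signOf (p.2 ⬝ᵥ y.2)) :=
    fun p => by unfold walshChar; ring
  simp only [hsplit, Fintype.sum_prod_type, ← Finset.mul_sum, ← Finset.sum_mul,
    sum_signOf_dotProduct_mul, Prod.ext_iff, ite_zero_mul_ite_zero, pow_add]

theorem sum_walshCoeff_mul (f g : (ι → ZMod 2) × (κ → ZMod 2) → ℝ) :
    ∑ p, walshCoeff f p * ∑ y, g y * walshChar p y = ∑ x, f x * g x := by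
  calc ∑ p, walshCoeff f p * ∑ y, g y * walshChar p y
      = ((2 : ℝ) ^ (card ι + card κ))⁻¹ *
          ∑ y, ∑ x, f x * g y * ∑ p, walshChar p x * walshChar p y := by
        simp only [walshCoeff, Finset.mul_sum, Finset.sum_mul]
        rw [Finset.sum_comm]
        refine Finset.sum_congr rfl fun y _ => ?_
        rw [Finset.sum_comm]
        exact Finset.sum_congr rfl fun x _ => Finset.sum_congr rfl fun p _ => by ring
    _ = ∑ x, f x * g x := by
        simp only [sum_walshChar_mul_walshChar, mul_ite, mul_zero, Finset.sum_ite_eq',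
          Finset.mem_univ, if_true, Finset.mul_sum]
        exact Finset.sum_congr rfl fun x _ => by field_simp

end Walsh

section Unitary

variable {m 𝕜 : Type*} [Fintype m] [DecidableEq m] [RCLike 𝕜]

theorem trace_diagonal_mul_conjTranspose_mul_diagonal_mul (a b : m → 𝕜) (C : Matrix m m 𝕜) :
    (diagonal a * Cᴴ * diagonal b * C).trace =
      ∑ w, ∑ z, ((‖C z w‖ ^ 2 : ℝ) : 𝕜) * (a w * b z) := by
  simp only [trace, diag_apply, mul_apply, diagonal_apply, ite_mul, zero_mul, mul_ite, mul_zero,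
    Finset.sum_ite_eq, Finset.sum_ite_eq', mem_univ, if_true, conjTranspose_apply,
    RCLike.ofReal_pow, ← RCLike.conj_mul, RCLike.star_def]
  exact sum_congr rfl fun w _ => sum_congr rfl fun z _ => by ring

theorem sum_norm_sq_apply_eq_one_of_mem_unitaryGroup {C : Matrix m m 𝕜}
    (hC : C ∈ unitaryGroup m 𝕜) (w : m) : ∑ z, ‖C z w‖ ^ 2 = 1 := by
  have hCC : Cᴴ * C = 1 := mem_unitaryGroup_iff'.mp hC
  have h : (Cᴴ * C) w w = 1 := by rw [hCC, one_apply_eq]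
  simp only [mul_apply, conjTranspose_apply, RCLike.star_def, RCLike.conj_mul] at h
  exact_mod_cast h

theorem abs_sum_mul_norm_sq_le_card {C : Matrix m m 𝕜} (hC : C ∈ unitaryGroup m 𝕜)
    (u : m × m → ℝ) (hu : ∀ x, |u x| ≤ 1) :
    |∑ x, ‖C x.2 x.1‖ ^ 2 * u x| ≤ card m :=
  calc |∑ x, ‖C x.2 x.1‖ ^ 2 * u x|
      ≤ ∑ x : m × m, ‖C x.2 x.1‖ ^ 2 := by
        refine (abs_sum_le_sum_abs _ _).trans (sum_le_sum fun x _ => ?_)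
        rw [abs_mul, abs_of_nonneg (sq_nonneg ‖C x.2 x.1‖)]
        exact mul_le_of_le_one_right (sq_nonneg _) (hu x)
    _ = card m := by
        simp [Fintype.sum_prod_type, sum_norm_sq_apply_eq_one_of_mem_unitaryGroup hC]

end Unitary

theorem abs_walsh_norm_sq_sum_le_one {ι : Type*} [Fintype ι] [DecidableEq ι]
    {C : Matrix (ι → ZMod 2) (ι → ZMod 2) ℂ} (hC : C ∈ unitaryGroup (ι → ZMod 2) ℂ)
    (p : (ι → ZMod 2) × (ι → ZMod 2)) :
    |((2 : ℝ) ^ card ι)⁻¹ * ∑ x, ‖C x.2 x.1‖ ^ 2 * walshChar p x| ≤ 1 :=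
  calc |((2 : ℝ) ^ card ι)⁻¹ * ∑ x, ‖C x.2 x.1‖ ^ 2 * walshChar p x|
      = ((2 : ℝ) ^ card ι)⁻¹ * |∑ x, ‖C x.2 x.1‖ ^ 2 * walshChar p x| := by
        rw [abs_mul, abs_of_pos (by positivity)]
    _ ≤ ((2 : ℝ) ^ card ι)⁻¹ * card (ι → ZMod 2) := by
        gcongr
        exact abs_sum_mul_norm_sq_le_card hC _ fun x => (abs_walshChar p x).le
    _ = 1 := by simp [ZMod.card]

theorem abs_sum_sub_sum_mul_le_sum_compl_abs {P : Type*} [Fintype P] [DecidableEq P]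
    (a t : P → ℝ) (ht : ∀ p, |t p| ≤ 1) (M : Finset P) :
    |∑ p, a p * t p - ∑ p ∈ M, a p * t p| ≤ ∑ p ∈ Mᶜ, |a p| := by
  rw [← sum_compl_add_sum M, add_sub_cancel_right]
  refine (abs_sum_le_sum_abs _ _).trans (sum_le_sum fun p _ => ?_)
  rw [abs_mul]
  exact mul_le_of_le_one_right (abs_nonneg _) (ht p)

theorem dqc1_simulates_half_bqp_sparse_fourier (n : ℕ)
    (C : Matrix (Fin n → ZMod 2) (Fin n → ZMod 2) ℂ)
    (hC : C ∈ Matrix.unitaryGroup (Fin n → ZMod 2) ℂ)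
    (f : (Fin n → ZMod 2) × (Fin n → ZMod 2) → ℝ)
    (M : Finset ((Fin n → ZMod 2) × (Fin n → ZMod 2))) :
    ‖((((1 / 2 ^ n) * ∑ w, ∑ z, ‖C z w‖ ^ 2 * f (w, z) : ℝ) : ℂ) -
          ∑ p ∈ M,
            (((2 : ℝ) ^ (2 * n))⁻¹ *
                ∑ w, ∑ z, f (w, z) * signOf (p.1 ⬝ᵥ w) * signOf (p.2 ⬝ᵥ z) : ℝ) *
              ((1 / 2 ^ n : ℂ) *
                (Matrix.diagonal (fun w => (signOf (p.1 ⬝ᵥ w) : ℂ)) * Cᴴ *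
                    Matrix.diagonal (fun z => (signOf (p.2 ⬝ᵥ z) : ℂ)) * C).trace))‖ ≤
      ∑ p ∈ Mᶜ,
        |((2 : ℝ) ^ (2 * n))⁻¹ *
            ∑ w, ∑ z, f (w, z) * signOf (p.1 ⬝ᵥ w) * signOf (p.2 ⬝ᵥ z)| := by
  have hcoeff : ∀ p, ((2 : ℝ) ^ (2 * n))⁻¹ *
      ∑ w, ∑ z, f (w, z) * signOf (p.1 ⬝ᵥ w) * signOf (p.2 ⬝ᵥ z) = walshCoeff f p := fun p => by
    simp only [walshCoeff, walshChar, Fintype.sum_prod_type, Fintype.card_fin, two_mul, mul_assoc]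
  set t : (Fin n → ZMod 2) × (Fin n → ZMod 2) → ℝ :=
    fun p => ((2 : ℝ) ^ n)⁻¹ * ∑ x, ‖C x.2 x.1‖ ^ 2 * walshChar p x
  have htrace : ∀ p : (Fin n → ZMod 2) × (Fin n → ZMod 2),
      (1 / 2 ^ n : ℂ) * (diagonal (fun w => (signOf (p.1 ⬝ᵥ w) : ℂ)) * Cᴴ *
        diagonal (fun z => (signOf (p.2 ⬝ᵥ z) : ℂ)) * C).trace = (t p : ℂ) := fun p => by
    rw [trace_diagonal_mul_conjTranspose_mul_diagonal_mul]
    simp [t, walshChar, Fintype.sum_prod_type]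
  have hsum : ∑ p, walshCoeff f p * t p = 1 / 2 ^ n * ∑ w, ∑ z, ‖C z w‖ ^ 2 * f (w, z) := by
    simp only [t, mul_left_comm (walshCoeff f _), ← mul_sum, sum_walshCoeff_mul]
    rw [one_div, Fintype.sum_prod_type]
    exact congrArg _ (sum_congr rfl fun w _ => sum_congr rfl fun z _ => mul_comm _ _)
  have ht : ∀ p, |t p| ≤ 1 := fun p => by
    simpa only [t, Fintype.card_fin] using abs_walsh_norm_sq_sum_le_one hC p
  simp_rw [hcoeff, htrace, ← hsum]
  norm_cast
  rw [Real.norm_eq_abs]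
  exact abs_sum_sub_sum_mul_le_sum_compl_abs _ _ ht M
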